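/- Let f be an entropic-uncertainty bound for N MUBs in dimension d. Then every fully separable density operator ρ on (ℂ^d)^{⊗n} satisfies 𝒞_N(ρ) ≤ log₂ d − f/N. Equivalently, any density operator ρ on (ℂ^d)^{⊗n} with 𝒞_N(ρ) > log₂ d − f/N is not fully separable (i.e. is entangled). -/

import Mathlib

open scoped BigOperators ComplexOrder

namespace Paper

noncomputable section

/-- Base-2 Shannon entropy of a finitely indexed probability vector. -/
def shannon {α : Type*} [Fintype α] (p : α → ℝ) : ℝ :=
  ∑ a, -(p a * Real.logb 2 (p a))

/-- Joint outcome type for `n` subsystems of local dimension `d`. -/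
abbrev Idx (n d : ℕ) := Fin n → Fin d

/-- The projector `|ψ⟩⟨ψ|`. -/
def proj {α : Type*} (ψ : α → ℂ) : Matrix α α ℂ :=
  Matrix.of fun x y => ψ x * (starRingEnd ℂ) (ψ y)

/-- A density operator: positive semidefinite with trace one. -/
def IsDensityOp {α : Type*} [Fintype α] [DecidableEq α] (ρ : Matrix α α ℂ) : Prop :=
  ρ.PosSemidef ∧ ρ.trace = 1

/-- `B` is an orthonormal basis of `ℂ^d` (`B i` is the `i`-th basis vector). -/
def IsONB {d : ℕ} (B : Fin d → Fin d → ℂ) : Prop :=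
  ∀ i j, (∑ x, (starRingEnd ℂ) (B i x) * B j x) = if i = j then 1 else 0

/-- Two bases of `ℂ^d` are mutually unbiased. -/
def MutUnbiased {d : ℕ} (B B' : Fin d → Fin d → ℂ) : Prop :=
  ∀ i j, ‖∑ x, (starRingEnd ℂ) (B i x) * B' j x‖ ^ 2 = 1 / d

/-- Joint outcome distribution of measuring the orthonormal basis `B l` on each factor `l`. -/
def jointProb {n d : ℕ} (ρ : Matrix (Idx n d) (Idx n d) ℂ)
    (B : Fin n → Fin d → Fin d → ℂ) (i : Idx n d) : ℝ :=
  (∑ x : Idx n d, ∑ y : Idx n d,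
    (∏ l, (starRingEnd ℂ) (B l (i l) (x l))) * ρ x y * (∏ l, B l (i l) (y l))).re

/-- Marginal distribution of subsystem `l`. -/
def margAt {n d : ℕ} (p : Idx n d → ℝ) (l : Fin n) (i : Fin d) : ℝ :=
  ∑ x : Idx n d, if x l = i then p x else 0

/-- Insert outcome `i` at position `l` into a tuple of outcomes of the other subsystems. -/
def insertAt {n d : ℕ} (l : Fin n) (i : Fin d) (g : {m : Fin n // m ≠ l} → Fin d) : Idx n d :=
  fun m => if h : m = l then i else g ⟨m, h⟩

/-- Marginal distribution of all subsystems except `l`. -/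
def margRest {n d : ℕ} (p : Idx n d → ℝ) (l : Fin n)
    (g : {m : Fin n // m ≠ l} → Fin d) : ℝ :=
  ∑ i : Fin d, p (insertAt l i g)

/-- Mutual information `I(B⁽ˡ⁾ : B⁽ˡ̄⁾)` between the outcome at subsystem `l` and the
outcomes at the remaining subsystems, for the joint outcome distribution `p`. -/
def mutualInfo {n d : ℕ} (p : Idx n d → ℝ) (l : Fin n) : ℝ :=
  shannon (margAt p l) + shannon (margRest p l) - shannon p

/-- The correlation function `C_N(ρ, {B_k^{(l)}})`. -/
def CNval {n d : ℕ} (N : ℕ) (ρ : Matrix (Idx n d) (Idx n d) ℂ)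
    (B : Fin N → Fin n → Fin d → Fin d → ℂ) : ℝ :=
  (1 / (n * N)) * ∑ k, ∑ l, mutualInfo (jointProb ρ (B k)) l

/-- `B k l` is, for each subsystem `l`, a family of `N` pairwise mutually unbiased
orthonormal bases (indexed by `k`). -/
def ValidMUBs {n d : ℕ} (N : ℕ) (B : Fin N → Fin n → Fin d → Fin d → ℂ) : Prop :=
  (∀ k l, IsONB (B k l)) ∧ ∀ l k k', k ≠ k' → MutUnbiased (B k l) (B k' l)

/-- The set of values `C_N(ρ, ·)` over all admissible choices of MUBs;
`𝒞_N(ρ)` is the supremum of this set. -/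
def CNvalues {n d : ℕ} (N : ℕ) (ρ : Matrix (Idx n d) (Idx n d) ℂ) : Set ℝ :=
  {x | ∃ B : Fin N → Fin n → Fin d → Fin d → ℂ, ValidMUBs N B ∧ x = CNval N ρ B}

/-- Single-subsystem reduced state `tr_{l̄} ρ`. -/
def reducedAt {n d : ℕ} (ρ : Matrix (Idx n d) (Idx n d) ℂ) (l : Fin n) :
    Matrix (Fin d) (Fin d) ℂ :=
  Matrix.of fun i j =>
    ∑ g : {m : Fin n // m ≠ l} → Fin d, ρ (insertAt l i g) (insertAt l j g)

/-- `ω_d = exp(2πi/d)`. -/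
def ω (d : ℕ) : ℂ := Complex.exp (2 * Real.pi * Complex.I / d)

/-- The generalized Pauli operator `X_d`. -/
def Xmat (d : ℕ) : Matrix (Fin d) (Fin d) ℂ :=
  Matrix.of fun i j => if (i : ℕ) = ((j : ℕ) + 1) % d then 1 else 0

/-- The generalized Pauli operator `Z_d`. -/
def Zmat (d : ℕ) : Matrix (Fin d) (Fin d) ℂ :=
  Matrix.of fun i j => if i = j then ω d ^ (i : ℕ) else 0

/-- The generalized Pauli operator `S_{d,(k₁,k₂)} = X_d^{k₁} Z_d^{k₂}`. -/
def Smat (d : ℕ) (k : Fin d × Fin d) : Matrix (Fin d) (Fin d) ℂ :=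
  Xmat d ^ (k.1 : ℕ) * Zmat d ^ (k.2 : ℕ)

/-- Apply a local operator `A l` to each tensor factor of a multipartite vector `ψ`,
i.e. the vector `(⊗_l A l) ψ`. -/
def applyLocal {n d : ℕ} (A : Fin n → Matrix (Fin d) (Fin d) ℂ) (ψ : Idx n d → ℂ) :
    Idx n d → ℂ :=
  fun x => ∑ y : Idx n d, (∏ l, A l (x l) (y l)) * ψ y

/-- The computational (standard) basis of `ℂ^d`, the eigenbasis of `Z_d`. -/
def stdBasis (d : ℕ) : Fin d → Fin d → ℂ :=
  fun i x => if x = i then 1 else 0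

/-- The Fourier basis of `ℂ^d`, the eigenbasis of `X_d`. -/
def fourierBasis (d : ℕ) : Fin d → Fin d → ℂ :=
  fun i x => (((Real.sqrt d)⁻¹ : ℝ) : ℂ) * ω d ^ ((i : ℕ) * (x : ℕ))

/-- The `n`-fold tensor product `⊗_l A l` as a matrix on the joint system. -/
def tensorN {n d : ℕ} (A : Fin n → Matrix (Fin d) (Fin d) ℂ) :
    Matrix (Idx n d) (Idx n d) ℂ :=
  Matrix.of fun x y => ∏ l, A l (x l) (y l)

/-- Full separability of an `n`-partite density operator. -/
def FullySep {n d : ℕ} (ρ : Matrix (Idx n d) (Idx n d) ℂ) : Prop :=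
  ∃ (J : ℕ) (p : Fin J → ℝ) (σ : Fin J → Fin n → Matrix (Fin d) (Fin d) ℂ),
    (∀ j, 0 ≤ p j) ∧ (∑ j, p j) = 1 ∧ (∀ j l, IsDensityOp (σ j l)) ∧
    ρ = ∑ j, p j • tensorN (σ j)

/-- generalized GHZ state `(1/√d) ∑_i |i⟩^{⊗n}`. -/
def GHZvec (d n : ℕ) : Idx n d → ℂ :=
  fun x => if ∀ l l', x l = x l' then (((Real.sqrt d)⁻¹ : ℝ) : ℂ) else 0


/-- Outcome distribution of measuring the basis `B` on the single-system state `σ`. -/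
def prob1 {d : ℕ} (σ : Matrix (Fin d) (Fin d) ℂ) (B : Fin d → Fin d → ℂ) (i : Fin d) : ℝ :=
  (∑ x, ∑ y, (starRingEnd ℂ) (B i x) * σ x y * B i y).re

/-- `f` is an entropic-uncertainty bound for `N` MUBs in dimension `d`:
`∑_k H(B_k|σ) ≥ f` for every set of `N` MUBs and every density operator `σ`. -/
def EntropicBound (d N : ℕ) (f : ℝ) : Prop :=
  ∀ B : Fin N → Fin d → Fin d → ℂ, (∀ k, IsONB (B k)) →
    (∀ k k', k ≠ k' → MutUnbiased (B k) (B k')) →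
    ∀ σ : Matrix (Fin d) (Fin d) ℂ, IsDensityOp σ →
      f ≤ ∑ k, shannon (prob1 σ (B k))

/-!
Write `ρ = ∑ⱼ pⱼ ⊗ₗ σⱼₗ`. Measuring local bases on `ρ` gives the mixture `∑ⱼ pⱼ ∏ₗ rⱼₗ` of
product distributions, `rⱼₗ` being the outcome law of the basis on `σⱼₗ`. For subsystem `l`,
`H(Aₗ) ≤ log₂ d`, and since the outcomes are independent given `j`, concavity of entropy gives
`H(Aₗ, A_l̄) ≥ ∑ⱼ pⱼ H(rⱼₗ) + H(A_l̄)`. Hence `I(Aₗ : A_l̄) ≤ log₂ d - ∑ⱼ pⱼ H(rⱼₗ)`, and summing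
over the `N` bases, the uncertainty bound for each `σⱼₗ` yields `∑ₖ I ≤ N log₂ d - f`.
-/

open Finset Real
open scoped Matrix

section Entropy

variable {α γ ι : Type*} [Fintype α] [Fintype γ] [Fintype ι]

theorem shannon_eq_sum_negMulLog_div (p : α → ℝ) :
    shannon p = (∑ a, negMulLog (p a)) / log 2 := by
  simp only [shannon, negMulLog, logb, sum_div, neg_mul, neg_div, mul_div_assoc]

theorem sum_negMulLog_le_log_card {p : α → ℝ} (h0 : ∀ a, 0 ≤ p a) (h1 : ∑ a, p a = 1) :
    ∑ a, negMulLog (p a) ≤ log (Fintype.card α) := by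
  have hα : Nonempty α := by
    by_contra! h
    simp at h1
  have hcard : (0 : ℝ) < Fintype.card α := by exact_mod_cast Fintype.card_pos
  have hjensen := concaveOn_negMulLog.le_map_sum (t := univ) (w := fun _ => (Fintype.card α : ℝ)⁻¹)
    (p := p) (fun _ _ => by positivity) (by simp [hcard.ne']) (fun a _ => h0 a)
  simp only [smul_eq_mul, ← mul_sum, h1, mul_one, negMulLog, log_inv] at hjensen
  rw [inv_mul_le_iff₀ hcard] at hjensen
  simpa [negMulLog, hcard.ne'] using hjensen

theorem shannon_le_logb_card {p : α → ℝ} (h0 : ∀ a, 0 ≤ p a) (h1 : ∑ a, p a = 1) :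
    shannon p ≤ logb 2 (Fintype.card α) := by
  rw [shannon_eq_sum_negMulLog_div, logb]
  exact div_le_div_of_nonneg_right (sum_negMulLog_le_log_card h0 h1) (log_nonneg one_le_two)

/-- Concavity of entropy, in a form homogeneous in the (unnormalised) weights `u`. -/
theorem sum_mul_sum_negMulLog_add_negMulLog_sum_le {u : ι → ℝ} {r : ι → α → ℝ}
    (hu : ∀ j, 0 ≤ u j) (hr0 : ∀ j a, 0 ≤ r j a) (hr1 : ∀ j, ∑ a, r j a = 1) :
    ∑ j, u j * ∑ a, negMulLog (r j a) + negMulLog (∑ j, u j)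
      ≤ ∑ a, negMulLog (∑ j, u j * r j a) := by
  set U := ∑ j, u j
  rcases (sum_nonneg fun j _ => hu j : 0 ≤ U).eq_or_lt with hU | hU
  · have hu0 : ∀ j, u j = 0 := fun j =>
      (sum_eq_zero_iff_of_nonneg fun j _ => hu j).1 hU.symm j (mem_univ j)
    simp [U, hu0]
  have hU0 : U ≠ 0 := hU.ne'
  set x : α → ℝ := fun a => ∑ j, u j / U * r j a
  have hmix : ∀ a, ∑ j, u j * r j a = U * x a := fun a => by
    simp only [x, mul_sum]
    exact sum_congr rfl fun j _ => by field_simp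
  have hx1 : ∑ a, x a = 1 := by
    simp only [x, sum_comm (γ := α), ← mul_sum, hr1, mul_one, ← sum_div, U]
    exact div_self hU0
  have hjensen : ∀ a, ∑ j, u j / U * negMulLog (r j a) ≤ negMulLog (x a) := fun a =>
    concaveOn_negMulLog.le_map_sum (fun j _ => div_nonneg (hu j) hU.le)
      (by rw [← sum_div]; exact div_self hU0) (fun j _ => hr0 j a)
  calc ∑ j, u j * ∑ a, negMulLog (r j a) + negMulLog U
      = U * ∑ a, ∑ j, u j / U * negMulLog (r j a) + negMulLog U * ∑ a, x a := by
        rw [hx1, mul_one, sum_comm, mul_sum]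
        congr 1
        exact sum_congr rfl fun j _ => by rw [← mul_sum]; field_simp
    _ ≤ U * ∑ a, negMulLog (x a) + negMulLog U * ∑ a, x a := by
        gcongr with a
        exact hjensen a
    _ = ∑ a, negMulLog (∑ j, u j * r j a) := by
        simp only [hmix, negMulLog_mul, sum_add_distrib, mul_sum]
        ring_nf

/-- If the pair `(A, B)` is, conditionally on a mixing label `j` with law `c`, independent with
laws `r j` and `s j`, then `H(A, B) ≥ H(A | j) + H(B)`. -/
theorem sum_mul_shannon_add_shannon_le_shannon_mixture {c : ι → ℝ} {r : ι → α → ℝ}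
    {s : ι → γ → ℝ} (hc : ∀ j, 0 ≤ c j) (hr0 : ∀ j a, 0 ≤ r j a) (hr1 : ∀ j, ∑ a, r j a = 1)
    (hs0 : ∀ j g, 0 ≤ s j g) (hs1 : ∀ j, ∑ g, s j g = 1) :
    ∑ j, c j * shannon (r j) + shannon (fun g => ∑ j, c j * s j g)
      ≤ shannon (fun x : α × γ => ∑ j, c j * r j x.1 * s j x.2) := by
  simp only [shannon_eq_sum_negMulLog_div, mul_div_assoc', ← sum_div, ← add_div]
  refine div_le_div_of_nonneg_right ?_ (log_nonneg one_le_two)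
  have hfibre : ∀ g, ∑ j, c j * s j g * ∑ a, negMulLog (r j a) + negMulLog (∑ j, c j * s j g)
      ≤ ∑ a, negMulLog (∑ j, c j * s j g * r j a) := fun g =>
    sum_mul_sum_negMulLog_add_negMulLog_sum_le (fun j => mul_nonneg (hc j) (hs0 j g)) hr0 hr1
  calc ∑ j, c j * ∑ a, negMulLog (r j a) + ∑ g, negMulLog (∑ j, c j * s j g)
      = ∑ g, (∑ j, c j * s j g * ∑ a, negMulLog (r j a) + negMulLog (∑ j, c j * s j g)) := by
        rw [sum_add_distrib, sum_comm]
        congr 1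
        exact sum_congr rfl fun j _ => by rw [← sum_mul, ← mul_sum, hs1, mul_one]
    _ ≤ ∑ g, ∑ a, negMulLog (∑ j, c j * s j g * r j a) := sum_le_sum fun g _ => hfibre g
    _ = ∑ x : α × γ, negMulLog (∑ j, c j * r j x.1 * s j x.2) := by
        rw [Fintype.sum_prod_type, sum_comm]
        exact sum_congr rfl fun a _ => sum_congr rfl fun g _ => by
          congr 1; exact sum_congr rfl fun j _ => by ring

end Entropy

section Marginals

variable {n d : ℕ}

@[simp]
theorem insertAt_self (l : Fin n) (i : Fin d) (g : {m : Fin n // m ≠ l} → Fin d) :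
    insertAt l i g l = i :=
  dif_pos rfl

@[simp]
theorem insertAt_of_ne (l : Fin n) (i : Fin d) (g : {m : Fin n // m ≠ l} → Fin d)
    (m : {m : Fin n // m ≠ l}) : insertAt l i g m = g m :=
  dif_neg m.2

theorem insertAt_eq_funSplitAt_symm (l : Fin n) (i : Fin d) (g : {m : Fin n // m ≠ l} → Fin d) :
    insertAt l i g = (Equiv.funSplitAt l (Fin d)).symm (i, g) := by
  funext m
  by_cases h : m = l
  · subst h; simp
  · simp [insertAt, h]

theorem sum_eq_sum_sum_insertAt {M : Type*} [AddCommMonoid M] (l : Fin n) (F : Idx n d → M) :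
    ∑ x, F x = ∑ i, ∑ g, F (insertAt l i g) := by
  simp only [insertAt_eq_funSplitAt_symm, ← Fintype.sum_prod_type',
    Equiv.sum_comp (Equiv.funSplitAt l (Fin d)).symm F]

theorem prod_insertAt {M : Type*} [CommMonoid M] (l : Fin n) (i : Fin d)
    (g : {m : Fin n // m ≠ l} → Fin d) (f : Fin n → Fin d → M) :
    ∏ m, f m (insertAt l i g m) = f l i * ∏ m : {m : Fin n // m ≠ l}, f m (g m) := by
  rw [Fintype.prod_eq_mul_prod_subtype_ne _ l]
  simp

theorem margAt_eq_sum_insertAt (p : Idx n d → ℝ) (l : Fin n) (i : Fin d) :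
    margAt p l i = ∑ g, p (insertAt l i g) := by
  simp [margAt, sum_eq_sum_sum_insertAt l]

theorem shannon_eq_shannon_insertAt (p : Idx n d → ℝ) (l : Fin n) :
    shannon p =
      shannon (fun x : Fin d × ({m : Fin n // m ≠ l} → Fin d) => p (insertAt l x.1 x.2)) := by
  rw [shannon, shannon, Fintype.sum_prod_type]
  exact sum_eq_sum_sum_insertAt l _

end Marginals

section ProdMixture

variable {ι : Type*} [Fintype ι] {n d : ℕ}

def prodMixture (c : ι → ℝ) (r : ι → Fin n → Fin d → ℝ) (i : Idx n d) : ℝ :=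
  ∑ j, c j * ∏ l, r j l (i l)

theorem mutualInfo_prodMixture_le {c : ι → ℝ} {r : ι → Fin n → Fin d → ℝ}
    (hc0 : ∀ j, 0 ≤ c j) (hc1 : ∑ j, c j = 1) (hr0 : ∀ j l a, 0 ≤ r j l a)
    (hr1 : ∀ j l, ∑ a, r j l a = 1) (l : Fin n) :
    mutualInfo (prodMixture c r) l ≤ logb 2 d - ∑ j, c j * shannon (r j l) := by
  set s : ι → ({m : Fin n // m ≠ l} → Fin d) → ℝ :=
    fun j g => ∏ m : {m : Fin n // m ≠ l}, r j m (g m)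
  have hs0 : ∀ j g, 0 ≤ s j g := fun j g => prod_nonneg fun m _ => hr0 j m (g m)
  have hs1 : ∀ j, ∑ g, s j g = 1 := fun j => by
    simp only [s, ← Fintype.prod_sum fun (m : {m : Fin n // m ≠ l}) a => r j m a, hr1,
      prod_const_one]
  have hsplit : ∀ i g, prodMixture c r (insertAt l i g) = ∑ j, c j * r j l i * s j g :=
    fun i g => sum_congr rfl fun j _ => by rw [prod_insertAt, mul_assoc]
  have hmargAt : margAt (prodMixture c r) l = fun i => ∑ j, c j * r j l i := by
    funext i
    rw [margAt_eq_sum_insertAt]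
    simp only [hsplit]
    rw [sum_comm]
    simp only [← mul_sum, hs1, mul_one]
  have hmargRest : margRest (prodMixture c r) l = fun g => ∑ j, c j * s j g := by
    funext g
    simp only [margRest, hsplit]
    rw [sum_comm]
    simp only [mul_right_comm _ _ (s _ g), ← mul_sum, hr1, mul_one]
  have hmargAt_le : shannon (fun i => ∑ j, c j * r j l i) ≤ logb 2 d := by
    simpa using shannon_le_logb_card (fun i => sum_nonneg fun j _ => mul_nonneg (hc0 j) (hr0 j l i))
      (by simp only [sum_comm (γ := Fin d), ← mul_sum, hr1, mul_one, hc1])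
  have hjoint := sum_mul_shannon_add_shannon_le_shannon_mixture hc0 (hr0 · l) (hr1 · l) hs0 hs1
  rw [mutualInfo, hmargAt, hmargRest, shannon_eq_shannon_insertAt _ l]
  simp only [hsplit]
  linarith

end ProdMixture

section Measurement

variable {n d : ℕ}

-- A one-sided inverse of a square matrix is two-sided: orthonormal rows give orthonormal columns.
theorem IsONB.sum_conj_mul {B : Fin d → Fin d → ℂ} (hB : IsONB B) (x y : Fin d) :
    ∑ i, starRingEnd ℂ (B i x) * B i y = if x = y then 1 else 0 := by
  have hrows : Matrix.of B * (Matrix.of B)ᴴ = 1 := by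
    ext i j
    simp only [Matrix.mul_apply, Matrix.conjTranspose_apply, Matrix.of_apply, RCLike.star_def,
      Matrix.one_apply, mul_comm (B i _), hB j i, eq_comm (a := j)]
  have hcols := congrArg (· x y) (mul_eq_one_comm.mp hrows)
  simpa [Matrix.mul_apply, Matrix.one_apply] using hcols

theorem sum_conj_mul_mul_nonneg {σ : Matrix (Fin d) (Fin d) ℂ} (hσ : σ.PosSemidef)
    (v : Fin d → ℂ) : 0 ≤ ∑ x, ∑ y, starRingEnd ℂ (v x) * σ x y * v y := by
  simpa only [dotProduct, Matrix.mulVec, Pi.star_apply, RCLike.star_def, mul_sum,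
    ← mul_assoc] using hσ.dotProduct_mulVec_nonneg v

theorem ofReal_prob1 {σ : Matrix (Fin d) (Fin d) ℂ} (hσ : σ.PosSemidef) (B : Fin d → Fin d → ℂ)
    (i : Fin d) :
    (prob1 σ B i : ℂ) = ∑ x, ∑ y, starRingEnd ℂ (B i x) * σ x y * B i y :=
  Complex.ext rfl (Complex.nonneg_iff.mp (sum_conj_mul_mul_nonneg hσ (B i))).2

theorem prob1_nonneg {σ : Matrix (Fin d) (Fin d) ℂ} (hσ : σ.PosSemidef) (B : Fin d → Fin d → ℂ)
    (i : Fin d) : 0 ≤ prob1 σ B i :=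
  (Complex.nonneg_iff.mp (sum_conj_mul_mul_nonneg hσ (B i))).1

theorem sum_prob1 (σ : Matrix (Fin d) (Fin d) ℂ) {B : Fin d → Fin d → ℂ} (hB : IsONB B) :
    ∑ i, prob1 σ B i = σ.trace.re := by
  have hcompl : ∑ i, ∑ x, ∑ y, starRingEnd ℂ (B i x) * σ x y * B i y = σ.trace := by
    rw [sum_comm]
    refine sum_congr rfl fun x _ => ?_
    rw [sum_comm]
    simp only [mul_right_comm _ (σ _ _), ← sum_mul, hB.sum_conj_mul, ite_mul, one_mul, zero_mul,
      sum_ite_eq, mem_univ, if_true, Matrix.diag_apply]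
  simp only [prob1, ← Complex.re_sum, hcompl]

theorem jointProb_sum_smul {ι : Type*} [Fintype ι] (p : ι → ℝ)
    (ρ : ι → Matrix (Idx n d) (Idx n d) ℂ) (C : Fin n → Fin d → Fin d → ℂ) (i : Idx n d) :
    jointProb (∑ j, p j • ρ j) C i = ∑ j, p j * jointProb (ρ j) C i := by
  simp only [jointProb, ← Complex.re_ofReal_mul, ← Complex.re_sum, Matrix.sum_apply,
    Matrix.smul_apply, Complex.real_smul, mul_sum, sum_mul]
  congr 1
  refine (sum_congr rfl fun x _ => sum_comm).trans (sum_comm.trans ?_)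
  exact sum_congr rfl fun j _ => sum_congr rfl fun x _ => sum_congr rfl fun y _ => by ring

theorem jointProb_tensorN {σ : Fin n → Matrix (Fin d) (Fin d) ℂ} (hσ : ∀ l, (σ l).PosSemidef)
    (C : Fin n → Fin d → Fin d → ℂ) (i : Idx n d) :
    jointProb (tensorN σ) C i = ∏ l, prob1 (σ l) (C l) (i l) := by
  set G : Fin n → Fin d → Fin d → ℂ :=
    fun l a b => starRingEnd ℂ (C l (i l) a) * σ l a b * C l (i l) b
  have hfactor : ∀ x y : Idx n d, (∏ l, starRingEnd ℂ (C l (i l) (x l))) * tensorN σ x y *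
      ∏ l, C l (i l) (y l) = ∏ l, G l (x l) (y l) :=
    fun x y => by rw [tensorN, Matrix.of_apply, ← prod_mul_distrib, ← prod_mul_distrib]
  have hsum : ∑ x : Idx n d, ∑ y : Idx n d, ∏ l, G l (x l) (y l) = ∏ l, ∑ a, ∑ b, G l a b := by
    simp only [Fintype.prod_sum]
  rw [jointProb]
  simp only [hfactor, hsum, G, ← ofReal_prob1 (hσ _), ← Complex.ofReal_prod, Complex.ofReal_re]

theorem jointProb_separable {ι : Type*} [Fintype ι] (p : ι → ℝ)
    {σ : ι → Fin n → Matrix (Fin d) (Fin d) ℂ} (hσ : ∀ j l, (σ j l).PosSemidef)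
    (C : Fin n → Fin d → Fin d → ℂ) :
    jointProb (∑ j, p j • tensorN (σ j)) C = prodMixture p (fun j l => prob1 (σ j l) (C l)) := by
  funext i
  simp only [jointProb_sum_smul, jointProb_tensorN (hσ _), prodMixture]

end Measurement

theorem sum_mutualInfo_separable_le {ι : Type*} [Fintype ι] {n d N : ℕ} {f : ℝ}
    (hf : EntropicBound d N f) {p : ι → ℝ} {σ : ι → Fin n → Matrix (Fin d) (Fin d) ℂ}
    (hp0 : ∀ j, 0 ≤ p j) (hp1 : ∑ j, p j = 1) (hσ : ∀ j l, IsDensityOp (σ j l))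
    {B : Fin N → Fin n → Fin d → Fin d → ℂ} (hB : ValidMUBs N B) (l : Fin n) :
    ∑ k, mutualInfo (jointProb (∑ j, p j • tensorN (σ j)) (B k)) l ≤ N * logb 2 d - f := by
  obtain ⟨hONB, hMUB⟩ := hB
  set H : ι → Fin N → ℝ := fun j k => shannon (prob1 (σ j l) (B k l))
  have hMI : ∀ k, mutualInfo (jointProb (∑ j, p j • tensorN (σ j)) (B k)) l
      ≤ logb 2 d - ∑ j, p j * H j k := fun k => by
    rw [jointProb_separable p (fun j l => (hσ j l).1)]
    refine mutualInfo_prodMixture_le hp0 hp1 (fun j l => prob1_nonneg (hσ j l).1 _)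
      (fun j l => ?_) l
    rw [sum_prob1 _ (hONB k l), (hσ j l).2, Complex.one_re]
  have hunc : f ≤ ∑ j, p j * ∑ k, H j k :=
    calc f = ∑ j, p j * f := by rw [← sum_mul, hp1, one_mul]
      _ ≤ ∑ j, p j * ∑ k, H j k := sum_le_sum fun j _ => mul_le_mul_of_nonneg_left
          (hf (B · l) (hONB · l) (hMUB l) (σ j l) (hσ j l)) (hp0 j)
  calc ∑ k, mutualInfo (jointProb (∑ j, p j • tensorN (σ j)) (B k)) l
      ≤ ∑ k, (logb 2 d - ∑ j, p j * H j k) := sum_le_sum fun k _ => hMI k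
    _ = N * logb 2 d - ∑ j, p j * ∑ k, H j k := by
        simp only [sum_sub_distrib, sum_const, card_univ, Fintype.card_fin, nsmul_eq_mul,
          mul_sum]
        rw [sum_comm]
    _ ≤ N * logb 2 d - f := by linarith

theorem fully_separable_CN_bound_general
    (n d N : ℕ) (hn : 1 ≤ n) (f : ℝ) (hf : EntropicBound d N f)
    (ρ : Matrix (Idx n d) (Idx n d) ℂ) (hsep : FullySep ρ) :
    ∀ x ∈ CNvalues N ρ, x ≤ Real.logb 2 d - f / N := by
  obtain ⟨J, p, σ, hp0, hp1, hσ, rfl⟩ := hsep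
  rintro _ ⟨B, hB, rfl⟩
  rcases N.eq_zero_or_pos with rfl | hN
  · -- both sides degenerate through division by zero: `CNval` is `0` and `f / 0 = 0`
    have hlog : 0 ≤ logb 2 d := div_nonneg (log_natCast_nonneg d) (log_nonneg one_le_two)
    simpa [CNval] using hlog
  have hn' : (0 : ℝ) < n := by exact_mod_cast hn
  calc CNval N (∑ j, p j • tensorN (σ j)) B
      ≤ 1 / (n * N) * ∑ _l : Fin n, (N * logb 2 d - f) := by
        rw [CNval, sum_comm]
        gcongr with l
        exact sum_mutualInfo_separable_le hf hp0 hp1 hσ hB l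
    _ = logb 2 d - f / N := by
        rw [sum_const, card_univ, Fintype.card_fin, nsmul_eq_mul]
        field_simp

/-- Lemma 6: every fully separable state satisfies `𝒞_N(ρ) ≤ log₂ d − f/N`; hence any
state exceeding this bound is entangled. -/
theorem fully_separable_CN_bound
    (n d N : ℕ) (hn : 1 ≤ n) (f : ℝ) (hf : EntropicBound d N f)
    (ρ : Matrix (Idx n d) (Idx n d) ℂ) (hρ : IsDensityOp ρ) (hsep : FullySep ρ) :
    ∀ x ∈ CNvalues N ρ, x ≤ Real.logb 2 d - f / N :=
  fully_separable_CN_bound_general n d N hn f hf ρ hsep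

end
end Paper
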